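/- Let s > 2 and λ > 0 with cosh λ = s/2. Then for every i ∈ {1,…,ℓ}, U_{ℓ−i}(s/2)/U_ℓ(s/2) + U_{i−1}(s/2)/U_ℓ(s/2) ≤ cosh((½(ℓ+1) − i)λ)/cosh(½(ℓ+1)λ), where U_n is the Chebyshev polynomial of the second kind. -/

import Mathlib

/-!
Multiplied by `sinh λ`, `U_m(cosh λ)` becomes `sinh((m+1)λ)`. With `c = ½(ℓ+1)λ` and
`d = (½(ℓ+1) - i)λ` the two numerators are `sinh(c+d) + sinh(c-d) = 2 sinh c cosh d` and the
denominator is `sinh 2c = 2 sinh c cosh c`, so the bound holds with equality.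
-/

namespace Real

theorem sinh_add_add_sinh_sub_div_sinh_two_mul {c : ℝ} (hc : c ≠ 0) (d : ℝ) :
    (sinh (c + d) + sinh (c - d)) / sinh (2 * c) = cosh d / cosh c := by
  have hsinh : sinh c ≠ 0 := sinh_ne_zero.mpr hc
  have hsum : sinh (c + d) + sinh (c - d) = 2 * sinh c * cosh d := by
    rw [sinh_add, sinh_sub]; ring
  rw [hsum, sinh_two_mul, mul_div_mul_left _ _ (mul_ne_zero two_ne_zero hsinh)]

end Real

namespace Polynomial.Chebyshev

theorem U_real_cosh_div_U_real_cosh {θ : ℝ} (hθ : θ ≠ 0) (m n : ℤ) :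
    (U ℝ m).eval (Real.cosh θ) / (U ℝ n).eval (Real.cosh θ) =
      Real.sinh ((m + 1) * θ) / Real.sinh ((n + 1) * θ) := by
  rw [← mul_div_mul_right _ _ (Real.sinh_ne_zero.mpr hθ), U_real_cosh, U_real_cosh]

theorem U_real_cosh_sub_add_U_real_cosh_sub_one_div {θ : ℝ} (hθ : θ ≠ 0) {n : ℤ}
    (hn : n ≠ -1) (i : ℤ) :
    (U ℝ (n - i)).eval (Real.cosh θ) / (U ℝ n).eval (Real.cosh θ) +
        (U ℝ (i - 1)).eval (Real.cosh θ) / (U ℝ n).eval (Real.cosh θ) =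
      Real.cosh (((n + 1) / 2 - i) * θ) / Real.cosh ((n + 1) / 2 * θ) := by
  have hc : ((n : ℝ) + 1) / 2 * θ ≠ 0 := by
    have : (n : ℝ) + 1 ≠ 0 := by exact_mod_cast (show n + 1 ≠ 0 by omega)
    positivity
  rw [U_real_cosh_div_U_real_cosh hθ, U_real_cosh_div_U_real_cosh hθ, ← add_div,
    ← Real.sinh_add_add_sinh_sub_div_sinh_two_mul hc]
  push_cast
  ring_nf

end Polynomial.Chebyshev

theorem chebyshev_boundary_coefficient_bound_general (s lam : ℝ) (hlam : 0 < lam)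
    (hcosh : Real.cosh lam = s / 2) (ℓ : ℤ) (hℓ : 1 ≤ ℓ) :
    ∀ i ∈ Finset.Icc 1 ℓ,
      (Polynomial.Chebyshev.U ℝ (ℓ - i)).eval (s / 2) /
          (Polynomial.Chebyshev.U ℝ ℓ).eval (s / 2) +
        (Polynomial.Chebyshev.U ℝ (i - 1)).eval (s / 2) /
          (Polynomial.Chebyshev.U ℝ ℓ).eval (s / 2) ≤
      Real.cosh ((((ℓ : ℝ) + 1) / 2 - (i : ℝ)) * lam) /
        Real.cosh ((((ℓ : ℝ) + 1) / 2) * lam) := by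
  intro i _
  rw [← hcosh]
  exact (Polynomial.Chebyshev.U_real_cosh_sub_add_U_real_cosh_sub_one_div hlam.ne'
    (by omega) i).le

/-- For `cosh λ = s/2`, `λ > 0`, and `i ∈ {1,…,ℓ}`:
`U_{ℓ−i}(s/2)/U_ℓ(s/2) + U_{i−1}(s/2)/U_ℓ(s/2) ≤ cosh((½(ℓ+1)−i)λ)/cosh(½(ℓ+1)λ)`. -/
theorem chebyshev_boundary_coefficient_bound (s lam : ℝ) (hs : 2 < s) (hlam : 0 < lam)
    (hcosh : Real.cosh lam = s / 2) (ℓ : ℤ) (hℓ : 1 ≤ ℓ) :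
    ∀ i ∈ Finset.Icc 1 ℓ,
      (Polynomial.Chebyshev.U ℝ (ℓ - i)).eval (s / 2) /
          (Polynomial.Chebyshev.U ℝ ℓ).eval (s / 2) +
        (Polynomial.Chebyshev.U ℝ (i - 1)).eval (s / 2) /
          (Polynomial.Chebyshev.U ℝ ℓ).eval (s / 2) ≤
      Real.cosh ((((ℓ : ℝ) + 1) / 2 - (i : ℝ)) * lam) /
        Real.cosh ((((ℓ : ℝ) + 1) / 2) * lam) :=
  chebyshev_boundary_coefficient_bound_general s lam hlam hcosh ℓ hℓ
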